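/- Let f : ℝ → ℝ be γ-Hölder on [0,T] with constant C > 0 (γ ∈ (0,1], T > 0), let p > 0 satisfy pγ > 1, and let X := f + J where J is the jump part with jump sizes c_1,…,c_r, not all zero, and distinct jump times τ_1,…,τ_r ∈ (0,T). Then the ratio of the 2δ-step to the δ-step p-variation of X converges to 1: lim_{δ→0+} B(X,p,2δ,T) / B(X,p,δ,T) = 1. -/

import Mathlib

open Finset Filter

/-- The `δ`-step `p`-variation of `X : ℝ → ℝ` up to horizon `T`:
`B(X,p,δ,T) = ∑_{k=1}^{⌊T/δ⌋} |X(kδ) − X((k−1)δ)|^p`. -/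
noncomputable def stepPVar (X : ℝ → ℝ) (p δ T : ℝ) : ℝ :=
  ∑ k ∈ Finset.Icc 1 ⌊T / δ⌋₊, |X ((k : ℝ) * δ) - X (((k : ℝ) - 1) * δ)| ^ p

/-!
For small `δ` the jump times `τ m` lie in pairwise distinct grid cells `((k - 1)δ, kδ]`,
`k = ⌈τ m / δ⌉₊ ≤ ⌊T / δ⌋₊`. Over such a cell the increment of `X` is an increment of `f` plus
`c m`, which tends to `c m`; every other increment is an increment of `f`, and by the Hölder bound
their `p`-th powers sum to at most `T C^p δ^(pγ - 1) → 0`. Hence `B(X,p,δ,T) → ∑ m, |c m|^p > 0`,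
and the same holds at step `2δ`.
-/

open Topology

noncomputable def jumpPart {ι : Type*} [Fintype ι] (c τ : ι → ℝ) (t : ℝ) : ℝ :=
  ∑ m, if τ m ≤ t then c m else 0

theorem Finset.sum_apply_add_sum_ite_eq_of_injective {ι κ M N : Type*} [Fintype ι]
    [DecidableEq κ] [AddCommMonoid M] [AddCommMonoid N] {s : Finset κ} {K : ι → κ}
    (hK : Function.Injective K) (hKs : ∀ m, K m ∈ s) (φ : M → N) (g : κ → M) (c : ι → M) :
    ∑ k ∈ s, φ (g k + ∑ m, if K m = k then c m else 0) =
      ∑ m, φ (g (K m) + c m) + ∑ k ∈ s \ univ.image K, φ (g k) := by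
  have hsub : univ.image K ⊆ s := by simpa [subset_iff] using hKs
  rw [← sum_sdiff hsub, add_comm, sum_image fun m _ m' _ h => hK h]
  congr 1
  · refine sum_congr rfl fun m _ => ?_
    classical
    simp only [hK.eq_iff, sum_ite_eq', mem_univ, if_true]
  · refine sum_congr rfl fun k hk => ?_
    have hk' : ∀ m, K m ≠ k := fun m h => (mem_sdiff.1 hk).2 (h ▸ mem_image_of_mem K (mem_univ m))
    simp [hk']

theorem ceil_div_eq_iff_mem_Ioc {t δ : ℝ} {k : ℕ} (hδ : 0 < δ) (hk : k ≠ 0) :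
    ⌈t / δ⌉₊ = k ↔ t ∈ Set.Ioc (((k : ℝ) - 1) * δ) (k * δ) := by
  rw [Nat.ceil_eq_iff hk, Nat.cast_sub (Nat.one_le_iff_ne_zero.2 hk), Nat.cast_one,
    lt_div_iff₀ hδ, div_le_iff₀ hδ, Set.mem_Ioc]

theorem ceil_div_mem_Icc_one_floor_div {t T δ : ℝ} (ht : 0 < t) (hδ : 0 < δ) (htT : t + δ ≤ T) :
    ⌈t / δ⌉₊ ∈ Icc 1 ⌊T / δ⌋₊ := by
  refine mem_Icc.2 ⟨Nat.ceil_pos.2 (div_pos ht hδ), Nat.le_floor ?_⟩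
  calc (⌈t / δ⌉₊ : ℝ) ≤ t / δ + 1 := (Nat.ceil_lt_add_one (div_pos ht hδ).le).le
    _ ≤ T / δ := by rw [div_add_one hδ.ne']; gcongr

theorem abs_sub_lt_of_ceil_div_eq {a b δ : ℝ} (ha : 0 < a) (hδ : 0 < δ)
    (h : ⌈a / δ⌉₊ = ⌈b / δ⌉₊) : |a - b| < δ := by
  have hk : ⌈a / δ⌉₊ ≠ 0 := (Nat.ceil_pos.2 (div_pos ha hδ)).ne'
  obtain ⟨ha₁, ha₂⟩ := (ceil_div_eq_iff_mem_Ioc hδ hk).1 rfl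
  obtain ⟨hb₁, hb₂⟩ := (ceil_div_eq_iff_mem_Ioc hδ hk).1 h.symm
  rw [abs_sub_lt_iff]
  constructor <;> linarith

theorem tendsto_rpow_nhdsGT_zero {a : ℝ} (ha : 0 < a) :
    Tendsto (fun δ : ℝ => δ ^ a) (𝓝[>] 0) (𝓝 0) := by
  simpa [Real.zero_rpow ha.ne'] using
    (Real.continuousAt_rpow_const 0 a (Or.inr ha.le)).tendsto.mono_left nhdsWithin_le_nhds

section Jumps

variable {ι : Type*} [Fintype ι] (c τ : ι → ℝ)

theorem jumpPart_sub_jumpPart {a b : ℝ} (hab : a ≤ b) :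
    jumpPart c τ b - jumpPart c τ a = ∑ m, if τ m ∈ Set.Ioc a b then c m else 0 := by
  rw [jumpPart, jumpPart, ← sum_sub_distrib]
  refine sum_congr rfl fun m _ => ?_
  by_cases hb : τ m ≤ b <;> by_cases ha : τ m ≤ a <;> simp [hb, ha]
  linarith

theorem jumpPart_increment {δ : ℝ} (hδ : 0 < δ) {k : ℕ} (hk : k ≠ 0) :
    jumpPart c τ (k * δ) - jumpPart c τ ((k - 1) * δ) =
      ∑ m, if ⌈τ m / δ⌉₊ = k then c m else 0 := by
  rw [jumpPart_sub_jumpPart c τ (by nlinarith)]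
  simp_rw [ceil_div_eq_iff_mem_Ioc hδ hk]

variable {τ} {T : ℝ}

theorem eventually_ceil_div_mem_Icc (hτ : ∀ m, τ m ∈ Set.Ioo 0 T) :
    ∀ᶠ δ in 𝓝[>] 0, ∀ m, ⌈τ m / δ⌉₊ ∈ Icc 1 ⌊T / δ⌋₊ := by
  refine eventually_all.2 fun m => ?_
  filter_upwards [self_mem_nhdsWithin,
    nhdsWithin_le_nhds (eventually_lt_nhds (sub_pos.2 (hτ m).2))] with δ hδ hδT
  exact ceil_div_mem_Icc_one_floor_div (hτ m).1 hδ (by linarith)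

theorem eventually_injective_ceil_div (hτ : Function.Injective τ) (hpos : ∀ m, 0 < τ m) :
    ∀ᶠ δ in 𝓝[>] 0, Function.Injective fun m => ⌈τ m / δ⌉₊ := by
  have hsep : ∀ m m', ∀ᶠ δ in 𝓝[>] (0 : ℝ), m ≠ m' → δ ≤ |τ m - τ m'| := by
    intro m m'
    by_cases h : m = m'
    · simp [h]
    · exact (eventually_nhdsWithin_of_eventually_nhds (eventually_le_nhds
        (abs_pos.2 (sub_ne_zero.2 (hτ.ne h))))).mono fun _ h _ => h
  filter_upwards [self_mem_nhdsWithin, eventually_all.2 fun m => eventually_all.2 (hsep m)]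
    with δ hδ hsep m m' h
  by_contra hne
  exact (abs_sub_lt_of_ceil_div_eq (hpos m) hδ h).not_ge (hsep m m' hne)

end Jumps

section Holder

variable {f : ℝ → ℝ} {γ C T : ℝ}

theorem abs_increment_le_of_holder
    (hf : ∀ s ∈ Set.Icc (0 : ℝ) T, ∀ t ∈ Set.Icc (0 : ℝ) T, |f s - f t| ≤ C * |s - t| ^ γ)
    {δ : ℝ} (hδ : 0 < δ) {k : ℕ} (hk : k ∈ Icc 1 ⌊T / δ⌋₊) :
    |f (k * δ) - f ((k - 1) * δ)| ≤ C * δ ^ γ := by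
  obtain ⟨hk₁, hkN⟩ := mem_Icc.1 hk
  have hk₁' : (1 : ℝ) ≤ k := by exact_mod_cast hk₁
  have hkT : (k : ℝ) * δ ≤ T := (le_div_iff₀ hδ).1 ((Nat.le_floor_iff' (by omega)).1 hkN)
  have h := hf (k * δ) ⟨by positivity, hkT⟩ ((k - 1) * δ) ⟨by nlinarith, by nlinarith⟩
  rwa [show (k : ℝ) * δ - (k - 1) * δ = δ by ring, abs_of_pos hδ] at h

theorem stepPVar_nonneg (X : ℝ → ℝ) (p δ T : ℝ) : 0 ≤ stepPVar X p δ T :=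
  sum_nonneg fun _ _ => by positivity

theorem stepPVar_le_of_abs_increment_le {X : ℝ → ℝ} {p δ M : ℝ} (hp : 0 ≤ p) (hδ : 0 < δ)
    (hT : 0 ≤ T) (hM : 0 ≤ M) (hX : ∀ k ∈ Icc 1 ⌊T / δ⌋₊, |X (k * δ) - X ((k - 1) * δ)| ≤ M) :
    stepPVar X p δ T ≤ T / δ * M ^ p :=
  calc stepPVar X p δ T ≤ ∑ k ∈ Icc 1 ⌊T / δ⌋₊, M ^ p :=
        sum_le_sum fun k hk => Real.rpow_le_rpow (abs_nonneg _) (hX k hk) hp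
    _ = ⌊T / δ⌋₊ * M ^ p := by simp
    _ ≤ T / δ * M ^ p := by gcongr; exact Nat.floor_le (by positivity)

theorem tendsto_stepPVar_zero_of_holder
    (hf : ∀ s ∈ Set.Icc (0 : ℝ) T, ∀ t ∈ Set.Icc (0 : ℝ) T, |f s - f t| ≤ C * |s - t| ^ γ)
    (hC : 0 ≤ C) (hT : 0 ≤ T) {p : ℝ} (hp : 0 < p) (hpγ : 1 < p * γ) :
    Tendsto (fun δ => stepPVar f p δ T) (𝓝[>] 0) (𝓝 0) := by
  have hlim : Tendsto (fun δ : ℝ => T * C ^ p * δ ^ (p * γ - 1)) (𝓝[>] 0) (𝓝 0) := by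
    simpa using (tendsto_rpow_nhdsGT_zero (sub_pos.2 hpγ)).const_mul (T * C ^ p)
  refine squeeze_zero' (.of_forall fun δ => stepPVar_nonneg f p δ T) ?_ hlim
  filter_upwards [self_mem_nhdsWithin] with δ (hδ : 0 < δ)
  calc stepPVar f p δ T ≤ T / δ * (C * δ ^ γ) ^ p :=
        stepPVar_le_of_abs_increment_le hp.le hδ hT (by positivity) fun k hk =>
          abs_increment_le_of_holder hf hδ hk
    _ = T * C ^ p * δ ^ (p * γ - 1) := by
        rw [Real.mul_rpow hC (by positivity), ← Real.rpow_mul hδ.le, Real.rpow_sub hδ,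
          Real.rpow_one, mul_comm γ p]
        field_simp

theorem tendsto_increment_of_holder
    (hf : ∀ s ∈ Set.Icc (0 : ℝ) T, ∀ t ∈ Set.Icc (0 : ℝ) T, |f s - f t| ≤ C * |s - t| ^ γ)
    (hγ : 0 < γ) {k : ℝ → ℕ} (hk : ∀ᶠ δ in 𝓝[>] 0, k δ ∈ Icc 1 ⌊T / δ⌋₊) :
    Tendsto (fun δ => f (k δ * δ) - f ((k δ - 1) * δ)) (𝓝[>] 0) (𝓝 0) := by
  rw [tendsto_zero_iff_abs_tendsto_zero]
  refine squeeze_zero' (.of_forall fun _ => abs_nonneg _) ?_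
    (by simpa using (tendsto_rpow_nhdsGT_zero hγ).const_mul C)
  filter_upwards [self_mem_nhdsWithin, hk] with δ hδ hkδ
  exact abs_increment_le_of_holder hf hδ hkδ

end Holder

theorem tendsto_stepPVar_add_jumpPart {ι : Type*} [Fintype ι] {f : ℝ → ℝ} {γ C T p : ℝ}
    (hf : ∀ s ∈ Set.Icc (0 : ℝ) T, ∀ t ∈ Set.Icc (0 : ℝ) T, |f s - f t| ≤ C * |s - t| ^ γ)
    (hC : 0 ≤ C) (hT : 0 ≤ T) (hγ : 0 < γ) (hp : 0 < p) (hpγ : 1 < p * γ) {c τ : ι → ℝ}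
    (hτ : Function.Injective τ) (hτmem : ∀ m, τ m ∈ Set.Ioo 0 T) :
    Tendsto (fun δ => stepPVar (fun t => f t + jumpPart c τ t) p δ T) (𝓝[>] 0)
      (𝓝 (∑ m, |c m| ^ p)) := by
  have hcells : ∀ᶠ δ in 𝓝[>] 0, ∀ m, ⌈τ m / δ⌉₊ ∈ Icc 1 ⌊T / δ⌋₊ :=
    eventually_ceil_div_mem_Icc hτmem
  have hsplit : ∀ᶠ δ in 𝓝[>] 0, stepPVar (fun t => f t + jumpPart c τ t) p δ T =
      ∑ m, |f (⌈τ m / δ⌉₊ * δ) - f ((⌈τ m / δ⌉₊ - 1) * δ) + c m| ^ p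
      + ∑ k ∈ Icc 1 ⌊T / δ⌋₊ \ univ.image fun m => ⌈τ m / δ⌉₊,
          |f (k * δ) - f ((k - 1) * δ)| ^ p := by
    filter_upwards [self_mem_nhdsWithin, hcells,
      eventually_injective_ceil_div hτ fun m => (hτmem m).1] with δ hδ hKmem hKinj
    refine (sum_congr rfl fun k hk => ?_).trans <| sum_apply_add_sum_ite_eq_of_injective hKinj
      hKmem (fun x => |x| ^ p) (fun k : ℕ => f (k * δ) - f ((k - 1) * δ)) c
    rw [add_sub_add_comm, jumpPart_increment c τ hδ (by have := (mem_Icc.1 hk).1; omega)]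
  have hjumps : Tendsto (fun δ => ∑ m, |f (⌈τ m / δ⌉₊ * δ) - f ((⌈τ m / δ⌉₊ - 1) * δ) + c m| ^ p)
      (𝓝[>] 0) (𝓝 (∑ m, |c m| ^ p)) :=
    tendsto_finsetSum _ fun m _ => by
      have hcont : Continuous fun x : ℝ => |x + c m| ^ p :=
        (continuous_add_const (c m)).abs.rpow_const fun _ => Or.inr hp.le
      simpa [Function.comp_def] using (hcont.tendsto 0).comp
        (tendsto_increment_of_holder hf hγ (hcells.mono fun δ h => h m))
  have hrest : Tendsto (fun δ => ∑ k ∈ Icc 1 ⌊T / δ⌋₊ \ univ.image fun m => ⌈τ m / δ⌉₊,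
      |f (k * δ) - f ((k - 1) * δ)| ^ p) (𝓝[>] 0) (𝓝 0) :=
    squeeze_zero (fun δ => sum_nonneg fun _ _ => by positivity)
      (fun δ => sum_le_sum_of_subset_of_nonneg sdiff_subset fun _ _ _ => by positivity)
      (tendsto_stepPVar_zero_of_holder hf hC hT hp hpγ)
  simpa using (hjumps.add hrest).congr' (hsplit.mono fun _ h => h.symm)

theorem pvariation_ratio_of_holder_plus_jumps_general
    (f : ℝ → ℝ) (γ C T p : ℝ) (hγ0 : 0 < γ) (hC : 0 < C)
    (hT : 0 < T) (hp : 0 < p) (hpγ : 1 < p * γ)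
    (hf : ∀ s ∈ Set.Icc (0 : ℝ) T, ∀ t ∈ Set.Icc (0 : ℝ) T,
      |f s - f t| ≤ C * |s - t| ^ γ)
    (r : ℕ) (c τ : Fin r → ℝ) (hτinj : Function.Injective τ)
    (hτmem : ∀ m, τ m ∈ Set.Ioo (0 : ℝ) T) (hc : ∃ m, c m ≠ 0)
    (X : ℝ → ℝ) (hX : X = fun t => f t + ∑ m, if τ m ≤ t then c m else 0) :
    Tendsto (fun δ : ℝ => stepPVar X p (2 * δ) T / stepPVar X p δ T)
      (nhdsWithin 0 (Set.Ioi 0)) (nhds 1) := by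
  obtain ⟨m₀, hm₀⟩ := hc
  have hS : 0 < ∑ m, |c m| ^ p :=
    sum_pos' (fun m _ => by positivity) ⟨m₀, mem_univ _, Real.rpow_pos_of_pos (abs_pos.2 hm₀) p⟩
  have hB : Tendsto (fun δ => stepPVar X p δ T) (𝓝[>] 0) (𝓝 (∑ m, |c m| ^ p)) := by
    subst hX
    exact tendsto_stepPVar_add_jumpPart hf hC.le hT.le hγ0 hp hpγ hτinj hτmem
  have hdouble : Tendsto (fun δ : ℝ => 2 * δ) (𝓝[>] 0) (𝓝[>] 0) := by
    refine tendsto_nhdsWithin_iff.2 ⟨?_, eventually_nhdsWithin_of_forall fun δ (hδ : 0 < δ) =>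
      show 0 < 2 * δ by positivity⟩
    exact ((continuous_const_mul 2).tendsto' 0 0 (mul_zero 2)).mono_left nhdsWithin_le_nhds
  have hratio := (hB.comp hdouble).div hB hS.ne'
  rwa [div_self hS.ne'] at hratio

/-- If `f` is `γ`-Hölder on `[0,T]` with constant `C > 0`, `pγ > 1`, and
`X = f + J` where `J = ∑_m c_m · 1_{[τ_m,∞)}` is a jump part with jump
sizes not all zero and distinct jump times `τ_m ∈ (0,T)`, then
`B(X,p,2δ,T) / B(X,p,δ,T) → 1` as `δ → 0+`. -/
theorem pvariation_ratio_of_holder_plus_jumps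
    (f : ℝ → ℝ) (γ C T p : ℝ) (hγ0 : 0 < γ) (hγ1 : γ ≤ 1) (hC : 0 < C)
    (hT : 0 < T) (hp : 0 < p) (hpγ : 1 < p * γ)
    (hf : ∀ s ∈ Set.Icc (0 : ℝ) T, ∀ t ∈ Set.Icc (0 : ℝ) T,
      |f s - f t| ≤ C * |s - t| ^ γ)
    (r : ℕ) (c τ : Fin r → ℝ) (hτinj : Function.Injective τ)
    (hτmem : ∀ m, τ m ∈ Set.Ioo (0 : ℝ) T) (hc : ∃ m, c m ≠ 0)
    (X : ℝ → ℝ) (hX : X = fun t => f t + ∑ m, if τ m ≤ t then c m else 0) :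
    Tendsto (fun δ : ℝ => stepPVar X p (2 * δ) T / stepPVar X p δ T)
      (nhdsWithin 0 (Set.Ioi 0)) (nhds 1) :=
  pvariation_ratio_of_holder_plus_jumps_general f γ C T p hγ0 hC hT hp hpγ hf r c τ hτinj hτmem hc X
    hX
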